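/- Let G be an inverse semigroup, H' ⊆ G a finite sub-inverse semigroup, and A a G-algebra. For all a, b ∈ A and g, h ∈ G_H, the following identity holds in 𝔽(G,A): ([g* h ∈ H] · α_{g*}(a*·b) · (g* h))* = [h* g ∈ H] · α_{h*}(b*·a) · (h* g), where [P] is the scalar 1 if P holds and 0 otherwise. (This is the identity ⟨x,y⟩_{B₀}* = ⟨y,x⟩_{B₀} on standard elements x = a⋊g, y = b⋊h.) -/

import Mathlib

/-! Common setup: inverse semigroups, G-algebras, and the universal *-algebra 𝔽(G,A). -/

noncomputable section

/-- An inverse semigroup: a semigroup in which every element `g` has a unique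
generalized inverse, denoted `star g`. -/
class InverseSemigroup (G : Type*) extends Semigroup G, Star G where
  mul_star_mul_self : ∀ g : G, g * star g * g = g
  star_mul_self_mul_star : ∀ g : G, star g * g * star g = star g
  star_unique : ∀ g h : G, g * h * g = g → h * g * h = h → h = star g

namespace Green

/-! ### The free complex *-algebra on a set of generators

The free complex *-algebra on a set `Y` is realized as the monoid algebra of the free
monoid on the letters `Y × Bool` (a generator together with a formal star flag); its star
operation conjugates coefficients, reverses words and flips the star flags. -/

/-- The free complex *-algebra on the set `Y`. -/
abbrev FreeStar (Y : Type*) := MonoidAlgebra ℂ (FreeMonoid (Y × Bool))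

namespace FreeStar

variable {Y : Type*}

/-- Star of a word: reverse it and flip all star flags. -/
def wordStar (w : FreeMonoid (Y × Bool)) : FreeMonoid (Y × Bool) :=
  FreeMonoid.ofList (((FreeMonoid.toList w).map fun x => (x.1, !x.2)).reverse)

lemma wordStar_mul (v w : FreeMonoid (Y × Bool)) :
    wordStar (v * w) = wordStar w * wordStar v := by
  simp [wordStar, FreeMonoid.toList_mul]

lemma wordStar_wordStar (w : FreeMonoid (Y × Bool)) : wordStar (wordStar w) = w := by
  simp [wordStar, List.map_reverse, List.map_map, Function.comp_def]

/-- The star operation on the free complex *-algebra, as an additive map. -/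
def starAux : FreeStar Y →+ FreeStar Y :=
  (MonoidAlgebra.coeffAddEquiv.symm.toAddMonoidHom.comp
    ((Finsupp.mapDomain.addMonoidHom wordStar).comp
      (Finsupp.mapRange.addMonoidHom (starRingEnd ℂ).toAddMonoidHom))).comp
    MonoidAlgebra.coeffAddEquiv.toAddMonoidHom

lemma starAux_apply (f : FreeStar Y) :
    starAux f = MonoidAlgebra.ofCoeff
      (Finsupp.mapDomain wordStar (Finsupp.mapRange (starRingEnd ℂ) (map_zero _) f.coeff)) :=
  rfl

lemma starAux_single (w : FreeMonoid (Y × Bool)) (c : ℂ) :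
    starAux (MonoidAlgebra.single w c) = MonoidAlgebra.single (wordStar w) (starRingEnd ℂ c) := by
  rw [starAux_apply]
  simp only [MonoidAlgebra.single, Finsupp.mapRange_single, Finsupp.mapDomain_single,
    MonoidAlgebra.coeff_ofCoeff]

instance instStarRing : StarRing (FreeStar Y) where
  star := starAux
  star_involutive := by
    intro f
    induction f using MonoidAlgebra.induction_linear with
    | zero => simp
    | add f g hf hg => simp_all [map_add]
    | single w c => simp [starAux_single, wordStar_wordStar, starRingEnd_self_apply]
  star_mul := by
    intro f g
    show starAux (f * g) = starAux g * starAux f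
    induction f using MonoidAlgebra.induction_linear with
    | zero => simp
    | add f f' hf hf' => simp [mul_add, add_mul, map_add, hf, hf']
    | single w c =>
      induction g using MonoidAlgebra.induction_linear with
      | zero => simp
      | add g g' hg hg' => simp [mul_add, add_mul, map_add, hg, hg']
      | single v d =>
        simp only [MonoidAlgebra.single_mul_single, starAux_single, wordStar_mul, map_mul]
        rw [mul_comm]
  star_add := map_add _

end FreeStar

section GAlgebra

variable {G : Type*} [InverseSemigroup G]
variable {A : Type*} [NonUnitalNormedRing A] [StarRing A] [CStarRing A] [NormedSpace ℂ A]
  [IsScalarTower ℂ A A] [SMulCommClass ℂ A A] [StarModule ℂ A] [CompleteSpace A]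

/-- `α` is an action of the inverse semigroup `G` on the C*-algebra `A` making it a
`G`-algebra: a semigroup homomorphism `G → End(A)` into the *-endomorphisms of `A` such
that `g g*(a)·b = a·g g*(b)` for all `a b : A` and `g : G`. -/
structure IsGAlgebra (α : G → A →⋆ₙₐ[ℂ] A) : Prop where
  map_mul : ∀ g h : G, α (g * h) = (α g).comp (α h)
  central : ∀ (g : G) (a b : A), α (g * star g) a * b = a * α (g * star g) b

variable (α : G → A →⋆ₙₐ[ℂ] A)

/-- The generator of the free *-algebra corresponding to `a ∈ A`. -/
def genA (a : A) : FreeStar (A ⊕ G) := MonoidAlgebra.single (FreeMonoid.of (Sum.inl a, false)) 1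

/-- The generator of the free *-algebra corresponding to `g ∈ G`. -/
def genG (g : G) : FreeStar (A ⊕ G) := MonoidAlgebra.single (FreeMonoid.of (Sum.inr g, false)) 1

/-- The defining relations of `𝔽(G,A)`: the *-algebra relations of `A` are respected, the
multiplication and involution of `G` are respected, and `g(a)·g g* = g·a·g*`,
`[g g*, a] = 0` hold; the relation is moreover closed under `star`, so that the ideal
generated by it is a two-sided *-ideal. -/
inductive Rel : FreeStar (A ⊕ G) → FreeStar (A ⊕ G) → Prop
  | add_A (a b : A) : Rel (genA (G := G) (a + b)) (genA a + genA b)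
  | smul_A (c : ℂ) (a : A) : Rel (genA (G := G) (c • a)) (c • genA a)
  | mul_A (a b : A) : Rel (genA (G := G) (a * b)) (genA a * genA b)
  | star_A (a : A) : Rel (genA (G := G) (star a)) (star (genA a))
  | mul_G (g h : G) : Rel (genG (A := A) (g * h)) (genG g * genG h)
  | star_G (g : G) : Rel (genG (A := A) (star g)) (star (genG g))
  | act (g : G) (a : A) :
      Rel (genA (α g a) * genG g * genG (star g)) (genG g * genA a * genG (star g))
  | comm (g : G) (a : A) :
      Rel (genG g * genG (star g) * genA a) (genA a * genG g * genG (star g))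
  | star_cl {x y} : Rel x y → Rel (star x) (star y)

/-- The universal *-algebra `𝔽(G,A)`: the quotient of the free complex *-algebra on the
set `A ⊔ G` by the two-sided *-ideal generated by the defining relations. -/
abbrev F := RingQuot (Rel α)

instance : StarRing (F α) := RingQuot.starRing _ (fun _ _ h => Rel.star_cl h)

/-- The canonical copy of `a ∈ A` inside `𝔽(G,A)`. -/
def ιA (a : A) : F α := RingQuot.mkAlgHom ℂ (Rel α) (genA a)

/-- The canonical copy of `g ∈ G` inside `𝔽(G,A)`. -/
def ιG (g : G) : F α := RingQuot.mkAlgHom ℂ (Rel α) (genG g)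

/-- The element `e₀(1-e₁)⋯(1-eₙ)` of `𝔽(G,A)` (product expanded multiplicatively),
given `e₀` and the list `[e₁, …, eₙ]`. -/
def elemP (e₀ : G) (l : List G) : F α :=
  l.foldl (fun p e => p - p * ιG α e) (ιG α e₀)

/-- The element `g·e₀(1-e₁)⋯(1-eₙ)` of `𝔽(G,A)`. -/
def elemGE (g e₀ : G) (l : List G) : F α := ιG α g * elemP α e₀ l

/-- The set `E(G)` of projections `e₀(1-e₁)⋯(1-eₙ)` in `𝔽(G,A)`, with `e₀, …, eₙ`
idempotents of `G`. -/
def EG : Set (F α) :=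
  {x | ∃ (e₀ : G) (l : List G), e₀ * e₀ = e₀ ∧ (∀ e ∈ l, e * e = e) ∧ x = elemP α e₀ l}

/-- The inverse semigroup `G_E = {g·p | g ∈ G, p ∈ E(G)}` inside `𝔽(G,A)`. -/
def GE : Set (F α) :=
  {x | ∃ (g e₀ : G) (l : List G),
    e₀ * e₀ = e₀ ∧ (∀ e ∈ l, e * e = e) ∧ x = elemGE α g e₀ l}

/-- The extension of the `G`-action along a list: `(id - α e₁)∘⋯∘(id - α eₙ)`. -/
def actL : List G → A → A
  | [] => id
  | e :: l => fun a => actL l a - α e (actL l a)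

/-- The extension of the `G`-action to `E(G)`:
`α_{e₀(1-e₁)⋯(1-eₙ)} = α_{e₀}∘(id - α_{e₁})∘⋯∘(id - α_{eₙ})`. -/
def actP (e₀ : G) (l : List G) : A → A := fun a => α e₀ (actL α l a)

/-- The extension of the `G`-action to `G_E`: `α_{g·p} = α_g ∘ α_p`. -/
def actGE (g e₀ : G) (l : List G) : A → A := fun a => α g (actP α e₀ l a)

/-- The action of `k* = (g·e₀(1-e₁)⋯(1-eₙ))* = g*·(g e₀ g*)(1 - g e₁ g*)⋯(1 - g eₙ g*)`,
for `k = g·e₀(1-e₁)⋯(1-eₙ) ∈ G_E`. -/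
def actStar (g e₀ : G) (l : List G) : A → A :=
  fun a => α (star g) (actP α (g * e₀ * star g) (l.map fun e => g * e * star g) a)

/-- The subalgebra `A_{k k*} = α_{k k*}(A) = (α_k ∘ α_{k*})(A)`,
for `k = g·e₀(1-e₁)⋯(1-eₙ) ∈ G_E`. -/
def carrier (g e₀ : G) (l : List G) : Set A :=
  Set.range fun a => actGE α g e₀ l (actStar α g e₀ l a)

/-- `S` is a sub-inverse semigroup of `G`: a subset closed under multiplication and
involution. -/
structure IsSubInvSemigroup (S : Set G) : Prop where
  mul_mem : ∀ {a b : G}, a ∈ S → b ∈ S → a * b ∈ S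
  star_mem : ∀ {a : G}, a ∈ S → star a ∈ S

variable (S : Set G)

/-- The set `E(H')` of projections `e₀(1-e₁)⋯(1-eₙ)` with `e₀, …, eₙ` idempotents of
`H' = S`. -/
def EH : Set (F α) :=
  {x | ∃ (e₀ : G) (l : List G), (e₀ ∈ S ∧ e₀ * e₀ = e₀) ∧ (∀ e ∈ l, e ∈ S ∧ e * e = e) ∧
    x = elemP α e₀ l}

/-- `H⁽⁰⁾`: the set of nonzero minimal projections of `E(H')`
(where `q ≤ p` means `q p = q`). -/
def H0 : Set (F α) :=
  {p | p ∈ EH α S ∧ p ≠ 0 ∧ ∀ q ∈ EH α S, q ≠ 0 → q * p = q → q = p}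

/-- The groupoid `H = {t·e | t ∈ H', e ∈ H⁽⁰⁾} \ {0}` associated to `H'`. -/
def Hgpd : Set (F α) :=
  {x | x ≠ 0 ∧ ∃ t ∈ S, ∃ e ∈ H0 α S, x = ιG α t * e}

/-- `G_H = {g·e | g ∈ G, e ∈ H⁽⁰⁾, g* g ≥ e} \ {0}`. -/
def GH : Set (F α) :=
  {x | x ≠ 0 ∧ ∃ (g : G), ∃ e ∈ H0 α S, x = ιG α g * e ∧ e * ιG α (star g * g) = e}

/-- The relation `≡` on `G_H`: `g ≡ h` iff `g t = h` for some `t ∈ H`. -/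
def equivH (x y : F α) : Prop := ∃ t ∈ Hgpd α S, x * t = y

end GAlgebra

/-- For an assertion `P`, the scalar `[P]` which is `1` if `P` is true and `0` if `P`
is false. -/
def ind (P : Prop) : ℂ := @ite _ P (Classical.propDecidable P) 1 0

end Green

/-!
Write `x = g·p` and `y = h·q` with `p, q ∈ E(G)`. If `x* y ∈ H`, then `y* x = (x* y)* ∈ H`
as well, and minimality of `x* x` and `y* y` in `H⁽⁰⁾` forces the range projections `x x*` and
`y y*` to coincide. The covariance relation `α_g(a)·g = g·a` of `𝔽(G,A)` then gives
`α_{x*}(c)·x* y = x*·α_{x x*}(c)·y = x*·α_{y y*}(c)·y = x* y·α_{y*}(c)`.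
Here `α_{x x*} = α_{y y*}` because the extended action of `E(G)` on `A` is induced by the
representation of `𝔽(G,A)` on `A` in which `A` acts by `0` and `g` by `α_g`, so it only depends
on the projection in `𝔽(G,A)`. Taking adjoints gives the identity. If `x* y ∉ H`, then
`y* x ∉ H` and both sides vanish.
-/
namespace InverseSemigroup

variable {G : Type*} [InverseSemigroup G]

instance : InvolutiveStar G where
  star_involutive g :=
    (star_unique (star g) g (star_mul_self_mul_star g) (mul_star_mul_self g)).symm

theorem isIdempotentElem_star_mul_self (g : G) : IsIdempotentElem (star g * g) := by
  rw [IsIdempotentElem, ← mul_assoc, star_mul_self_mul_star]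

theorem isIdempotentElem_mul_star_self (g : G) : IsIdempotentElem (g * star g) := by
  rw [IsIdempotentElem, ← mul_assoc, mul_star_mul_self]

theorem star_eq_self_of_isIdempotentElem {e : G} (he : IsIdempotentElem e) : star e = e :=
  (star_unique e e (by rw [he.eq, he.eq]) (by rw [he.eq, he.eq])).symm

theorem isIdempotentElem_mul {e f : G} (he : IsIdempotentElem e) (hf : IsIdempotentElem f) :
    IsIdempotentElem (e * f) := by
  -- `f (e f)* e` is a generalized inverse of `e f`, hence equal to `(e f)*`.
  have hx : f * star (e * f) * e = star (e * f) := by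
    refine star_unique _ _ ?_ ?_
    · calc e * f * (f * star (e * f) * e) * (e * f)
          = e * (f * f) * star (e * f) * (e * e) * f := by simp only [mul_assoc]
        _ = e * f := by rw [hf.eq, he.eq, mul_assoc (e * f * star (e * f)) e f,
            mul_star_mul_self]
    · calc f * star (e * f) * e * (e * f) * (f * star (e * f) * e)
          = f * (star (e * f) * ((e * e) * (f * f)) * star (e * f)) * e := by
            simp only [mul_assoc]
        _ = f * star (e * f) * e := by rw [he.eq, hf.eq, star_mul_self_mul_star]
  have hxx : IsIdempotentElem (star (e * f)) := by
    calc star (e * f) * star (e * f) = f * star (e * f) * e * (f * star (e * f) * e) := by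
          rw [hx]
      _ = f * (star (e * f) * (e * f) * star (e * f)) * e := by simp only [mul_assoc]
      _ = star (e * f) := by rw [star_mul_self_mul_star, hx]
  rw [← star_star (e * f), star_eq_self_of_isIdempotentElem hxx]
  exact hxx

theorem commute_of_isIdempotentElem {e f : G} (he : IsIdempotentElem e)
    (hf : IsIdempotentElem f) : Commute e f := by
  have hef := isIdempotentElem_mul he hf
  have hfe := isIdempotentElem_mul hf he
  -- both `f e` and `e f` are generalized inverses of `e f`
  have h : f * e = star (e * f) := by
    refine star_unique _ _ ?_ ?_
    · calc e * f * (f * e) * (e * f) = e * (f * f) * (e * e) * f := by simp only [mul_assoc]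
        _ = e * f * (e * f) := by rw [hf.eq, he.eq]; simp only [mul_assoc]
        _ = e * f := hef
    · calc f * e * (e * f) * (f * e) = f * (e * e) * (f * f) * e := by simp only [mul_assoc]
        _ = f * e * (f * e) := by rw [hf.eq, he.eq]; simp only [mul_assoc]
        _ = f * e := hfe
  rw [Commute, SemiconjBy, h, star_eq_self_of_isIdempotentElem hef]

instance : StarMul G where
  star_mul g h := by
    refine (star_unique (g * h) (star h * star g) ?_ ?_).symm
    · calc g * h * (star h * star g) * (g * h)
          = g * ((h * star h) * (star g * g)) * h := by simp only [mul_assoc]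
        _ = g * star g * g * (h * star h * h) := by
          rw [(commute_of_isIdempotentElem (isIdempotentElem_mul_star_self h)
            (isIdempotentElem_star_mul_self g)).eq]
          simp only [mul_assoc]
        _ = g * h := by rw [mul_star_mul_self, mul_star_mul_self]
    · calc star h * star g * (g * h) * (star h * star g)
          = star h * ((star g * g) * (h * star h)) * star g := by simp only [mul_assoc]
        _ = star h * h * star h * (star g * g * star g) := by
          rw [(commute_of_isIdempotentElem (isIdempotentElem_star_mul_self g)
            (isIdempotentElem_mul_star_self h)).eq]
          simp only [mul_assoc]
        _ = star h * star g := by rw [star_mul_self_mul_star, star_mul_self_mul_star]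

theorem isIdempotentElem_conj {e : G} (he : IsIdempotentElem e) (g : G) :
    IsIdempotentElem (g * e * star g) := by
  calc g * e * star g * (g * e * star g) = g * (e * (star g * g)) * e * star g := by
        simp only [mul_assoc]
    _ = g * e * star g := by
        rw [(commute_of_isIdempotentElem he (isIdempotentElem_star_mul_self g)).eq,
          ← mul_assoc, ← mul_assoc, mul_star_mul_self, mul_assoc g e e, he.eq]

theorem mul_star_eq_star_mul_conj {e : G} (he : IsIdempotentElem e) (g : G) :
    e * star g = star g * (g * e * star g) := by
  calc e * star g = e * (star g * g) * star g := by
        rw [mul_assoc, star_mul_self_mul_star]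
    _ = star g * (g * e * star g) := by
        rw [(commute_of_isIdempotentElem he (isIdempotentElem_star_mul_self g)).eq]
        simp only [mul_assoc]

end InverseSemigroup

theorem IsIdempotentElem.eq_of_commute {R : Type*} [Semigroup R] {p q : R}
    (hp : IsIdempotentElem p) (hq : IsIdempotentElem q) (hpq : Commute p q)
    (hpqp : p * q * p = p) (hqpq : q * p * q = q) : p = q :=
  calc p = p * q * p := hpqp.symm
    _ = p * q := by rw [mul_assoc, ← hpq.eq, ← mul_assoc, hp.eq]
    _ = q * p * q := by rw [mul_assoc, hpq.eq, ← mul_assoc, hq.eq]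
    _ = q := hqpq

theorem mul_star_self_eq_of_commute {R : Type*} [Semigroup R] [StarMul R] {x y : R}
    (hx : x * star x * x = x) (hy : y * star y * y = y)
    (hcomm : Commute (x * star x) (y * star y))
    (hxy : star x * y * star (star x * y) = star x * x)
    (hyx : star y * x * star (star y * x) = star y * y) :
    x * star x = y * star y := by
  refine IsIdempotentElem.eq_of_commute ?_ ?_ hcomm ?_ ?_
  · rw [IsIdempotentElem, ← mul_assoc, hx]
  · rw [IsIdempotentElem, ← mul_assoc, hy]
  · calc x * star x * (y * star y) * (x * star x)
        = x * (star x * y * star (star x * y)) * star x := by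
          simp only [star_mul, star_star, mul_assoc]
      _ = x * star x := by rw [hxy, ← mul_assoc, hx]
  · calc y * star y * (x * star x) * (y * star y)
        = y * (star y * x * star (star y * x)) * star y := by
          simp only [star_mul, star_star, mul_assoc]
      _ = y * star y := by rw [hyx, ← mul_assoc, hy]

namespace Green

theorem FreeStar.star_single_of {Y : Type*} (y : Y) :
    star (MonoidAlgebra.single (FreeMonoid.of (y, false)) (1 : ℂ)) =
      MonoidAlgebra.single (FreeMonoid.of (y, true)) 1 :=
  (FreeStar.starAux_single _ _).trans (by simp [FreeStar.wordStar])

section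

variable {G A : Type*} [NonUnitalNormedRing A] [StarRing A] [NormedSpace ℂ A]
variable (α : G → A →⋆ₙₐ[ℂ] A)

theorem actL_star (l : List G) (a : A) : actL α l (star a) = star (actL α l a) := by
  induction l with
  | nil => rfl
  | cons e l ih => simp only [actL, ih, map_star, star_sub]

variable [InverseSemigroup G]

open InverseSemigroup

section Relations

theorem star_mkAlgHom (x : FreeStar (A ⊕ G)) :
    star (RingQuot.mkAlgHom ℂ (Rel α) x) = RingQuot.mkAlgHom ℂ (Rel α) (star x) := by
  simp only [RingQuot.mkAlgHom_def, RingQuot.mkRingHom_def]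
  rfl

theorem ιG_mul (g h : G) : ιG α (g * h) = ιG α g * ιG α h := by
  rw [ιG, ιG, ιG, ← map_mul]
  exact RingQuot.mkAlgHom_rel ℂ (Rel.mul_G g h)

theorem star_ιG (g : G) : star (ιG α g) = ιG α (star g) := by
  rw [ιG, ιG, star_mkAlgHom]
  exact (RingQuot.mkAlgHom_rel ℂ (Rel.star_G g)).symm

theorem star_ιA (a : A) : star (ιA α a) = ιA α (star a) := by
  rw [ιA, ιA, star_mkAlgHom]
  exact (RingQuot.mkAlgHom_rel ℂ (Rel.star_A a)).symm

theorem commute_ιG_ιA {f : G} (hf : IsIdempotentElem f) (a : A) :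
    Commute (ιG α f) (ιA α a) := by
  have h : ιG α f * ιG α (star f) * ιA α a = ιA α a * ιG α f * ιG α (star f) := by
    simpa only [ιA, ιG, map_mul] using RingQuot.mkAlgHom_rel ℂ (Rel.comm (α := α) f a)
  rwa [← ιG_mul, mul_assoc, ← ιG_mul, star_eq_self_of_isIdempotentElem hf, hf.eq] at h

theorem isStarProjection_ιG {f : G} (hf : IsIdempotentElem f) : IsStarProjection (ιG α f) where
  isIdempotentElem := by rw [IsIdempotentElem, ← ιG_mul, hf.eq]
  isSelfAdjoint := by rw [IsSelfAdjoint, star_ιG, star_eq_self_of_isIdempotentElem hf]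

theorem commute_ιG_ιG {e f : G} (he : IsIdempotentElem e) (hf : IsIdempotentElem f) :
    Commute (ιG α e) (ιG α f) := by
  rw [Commute, SemiconjBy, ← ιG_mul, ← ιG_mul, (commute_of_isIdempotentElem he hf).eq]

theorem ιA_act_mul_ιG (g : G) (a : A) : ιA α (α g a) * ιG α g = ιG α g * ιA α a := by
  have h :
      ιA α (α g a) * ιG α g * ιG α (star g) = ιG α g * ιA α a * ιG α (star g) := by
    simpa only [ιA, ιG, map_mul] using RingQuot.mkAlgHom_rel ℂ (Rel.act (α := α) g a)
  calc ιA α (α g a) * ιG α g = ιA α (α g a) * (ιG α g * ιG α (star g) * ιG α g) := by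
        rw [← ιG_mul, ← ιG_mul, mul_star_mul_self]
    _ = ιG α g * ιA α a * ιG α (star g) * ιG α g := by rw [← h]; noncomm_ring
    _ = ιG α g * (ιG α (star g * g) * ιA α a) := by
        rw [(commute_ιG_ιA α (isIdempotentElem_star_mul_self g) a).eq, ιG_mul]; noncomm_ring
    _ = ιG α g * ιA α a := by rw [← mul_assoc, ← ιG_mul, ← mul_assoc, mul_star_mul_self]

end Relations

section Projections

def prodOneSub (l : List G) : F α := (l.map fun e => 1 - ιG α e).prod

theorem prodOneSub_cons (e : G) (l : List G) :
    prodOneSub α (e :: l) = (1 - ιG α e) * prodOneSub α l := by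
  rw [prodOneSub, List.map_cons, List.prod_cons, prodOneSub]

theorem elemP_eq_mul_prodOneSub (e₀ : G) (l : List G) :
    elemP α e₀ l = ιG α e₀ * prodOneSub α l := by
  suffices h : ∀ s : F α, l.foldl (fun p e => p - p * ιG α e) s = s * prodOneSub α l from h _
  induction l with
  | nil => intro s; rw [List.foldl_nil, prodOneSub, List.map_nil, List.prod_nil, mul_one]
  | cons e l ih =>
    intro s
    rw [List.foldl_cons, ih, prodOneSub_cons, ← mul_assoc, mul_sub, mul_one]

theorem ιG_mul_elemP (f e₀ : G) (l : List G) :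
    ιG α f * elemP α e₀ l = elemP α (f * e₀) l := by
  rw [elemP_eq_mul_prodOneSub, elemP_eq_mul_prodOneSub, ← mul_assoc, ← ιG_mul]

theorem commute_prodOneSub {l : List G} {x : F α} (h : ∀ e ∈ l, Commute (ιG α e) x) :
    Commute (prodOneSub α l) x := by
  refine Commute.list_prod_left _ _ fun y hy => ?_
  obtain ⟨e, he, rfl⟩ := List.mem_map.1 hy
  exact (Commute.one_left x).sub_left (h e he)

theorem commute_elemP {e₀ : G} {l : List G} {x : F α} (h₀ : Commute (ιG α e₀) x)
    (h : ∀ e ∈ l, Commute (ιG α e) x) : Commute (elemP α e₀ l) x := by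
  rw [elemP_eq_mul_prodOneSub]
  exact h₀.mul_left (commute_prodOneSub α h)

theorem isStarProjection_prodOneSub {l : List G} (hl : ∀ e ∈ l, IsIdempotentElem e) :
    IsStarProjection (prodOneSub α l) := by
  induction l with
  | nil => exact IsStarProjection.one _
  | cons e l ih =>
    obtain ⟨he, hl'⟩ := List.forall_mem_cons.1 hl
    rw [prodOneSub_cons]
    exact (isStarProjection_ιG α he).one_sub.mul (ih hl') ((Commute.one_left _).sub_left
      (commute_prodOneSub α fun f hf => commute_ιG_ιG α (hl' f hf) he).symm)

theorem isStarProjection_elemP {e₀ : G} {l : List G} (he₀ : IsIdempotentElem e₀)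
    (hl : ∀ e ∈ l, IsIdempotentElem e) : IsStarProjection (elemP α e₀ l) := by
  rw [elemP_eq_mul_prodOneSub]
  exact (isStarProjection_ιG α he₀).mul (isStarProjection_prodOneSub α hl)
    (commute_prodOneSub α fun e he => commute_ιG_ιG α (hl e he) he₀).symm

theorem semiconjBy_ιG_star_ιG {e : G} (he : IsIdempotentElem e) (g : G) :
    SemiconjBy (ιG α (star g)) (ιG α (g * e * star g)) (ιG α e) := by
  rw [SemiconjBy, ← ιG_mul, ← ιG_mul, mul_star_eq_star_mul_conj he]

theorem semiconjBy_ιG_star_prodOneSub {l : List G} (hl : ∀ e ∈ l, IsIdempotentElem e) (g : G) :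
    SemiconjBy (ιG α (star g)) (prodOneSub α (l.map fun e => g * e * star g))
      (prodOneSub α l) := by
  induction l with
  | nil => exact SemiconjBy.one_right _
  | cons e l ih =>
    obtain ⟨he, hl'⟩ := List.forall_mem_cons.1 hl
    rw [List.map_cons, prodOneSub_cons, prodOneSub_cons]
    exact ((SemiconjBy.one_right _).sub_right (semiconjBy_ιG_star_ιG α he g)).mul_right (ih hl')

theorem semiconjBy_ιG_star_elemP {e₀ : G} {l : List G} (he₀ : IsIdempotentElem e₀)
    (hl : ∀ e ∈ l, IsIdempotentElem e) (g : G) :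
    SemiconjBy (ιG α (star g)) (elemP α (g * e₀ * star g) (l.map fun e => g * e * star g))
      (elemP α e₀ l) := by
  rw [elemP_eq_mul_prodOneSub, elemP_eq_mul_prodOneSub]
  exact (semiconjBy_ιG_star_ιG α he₀ g).mul_right (semiconjBy_ιG_star_prodOneSub α hl g)

theorem ιG_mul_elemP_mul_star {e₀ : G} {l : List G} (he₀ : IsIdempotentElem e₀)
    (hl : ∀ e ∈ l, IsIdempotentElem e) (g : G) :
    ιG α g * elemP α e₀ l * ιG α (star g) =
      elemP α (g * e₀ * star g) (l.map fun e => g * e * star g) := by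
  rw [mul_assoc, ← (semiconjBy_ιG_star_elemP α he₀ hl g).eq, ← mul_assoc, ← ιG_mul,
    ιG_mul_elemP]
  simp only [← mul_assoc, mul_star_mul_self]

end Projections

section ProjectionSets

theorem isStarProjection_of_mem_EG {p : F α} (hp : p ∈ EG α) : IsStarProjection p := by
  obtain ⟨e₀, l, he₀, hl, rfl⟩ := hp
  exact isStarProjection_elemP α he₀ hl

theorem commute_of_mem_EG {p x : F α} (hp : p ∈ EG α)
    (hx : ∀ f : G, IsIdempotentElem f → Commute (ιG α f) x) : Commute p x := by
  obtain ⟨e₀, l, he₀, hl, rfl⟩ := hp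
  exact commute_elemP α (hx e₀ he₀) fun e he => hx e (hl e he)

theorem ιG_mul_mul_star_mem_EG {p : F α} (hp : p ∈ EG α) (g : G) :
    ιG α g * p * ιG α (star g) ∈ EG α := by
  obtain ⟨e₀, l, he₀, hl, rfl⟩ := hp
  rw [ιG_mul_elemP_mul_star α he₀ hl]
  refine ⟨_, _, isIdempotentElem_conj he₀ g, fun e he => ?_, rfl⟩
  obtain ⟨f, hf, rfl⟩ := List.mem_map.1 he
  exact isIdempotentElem_conj (hl f hf) g

theorem mul_ιG_star_of_mem_EG {p : F α} (hp : p ∈ EG α) (g : G) :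
    p * ιG α (star g) = ιG α (star g) * (ιG α g * p * ιG α (star g)) := by
  obtain ⟨e₀, l, he₀, hl, rfl⟩ := hp
  rw [ιG_mul_elemP_mul_star α he₀ hl]
  exact (semiconjBy_ιG_star_elemP α he₀ hl g).eq.symm

theorem star_ιG_mul_of_mem_EG {p : F α} (hp : p ∈ EG α) (g : G) :
    star (ιG α g * p) = p * ιG α (star g) := by
  rw [star_mul, star_ιG, (isStarProjection_of_mem_EG α hp).isSelfAdjoint.star_eq]

theorem ιG_mul_mul_star_self {p : F α} (hp : p ∈ EG α) (g : G) :
    ιG α g * p * star (ιG α g * p) = ιG α g * p * ιG α (star g) := by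
  rw [star_ιG_mul_of_mem_EG α hp, ← mul_assoc, mul_assoc _ p p,
    (isStarProjection_of_mem_EG α hp).isIdempotentElem.eq]

theorem ιG_mul_mul_star_mul_self {p : F α} (hp : p ∈ EG α) (g : G) :
    ιG α g * p * star (ιG α g * p) * (ιG α g * p) = ιG α g * p := by
  have hcomm := commute_of_mem_EG α hp fun f hf =>
    commute_ιG_ιG α hf (isIdempotentElem_star_mul_self g)
  calc ιG α g * p * star (ιG α g * p) * (ιG α g * p)
      = ιG α g * (p * ιG α (star g * g)) * p := by
        rw [ιG_mul_mul_star_self α hp, ιG_mul]; noncomm_ring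
    _ = ιG α (g * star g * g) * (p * p) := by
        rw [hcomm.eq, mul_assoc g (star g) g, ιG_mul α g]; noncomm_ring
    _ = ιG α g * p := by
        rw [mul_star_mul_self, (isStarProjection_of_mem_EG α hp).isIdempotentElem.eq]

variable (S : Set G)

theorem mem_EG_of_mem_EH {p : F α} (hp : p ∈ EH α S) : p ∈ EG α := by
  obtain ⟨e₀, l, ⟨-, he₀⟩, hl, rfl⟩ := hp
  exact ⟨e₀, l, he₀, fun e he => (hl e he).2, rfl⟩

theorem ιG_mul_mul_star_mem_EH (hS : IsSubInvSemigroup S) {t : G} (ht : t ∈ S) {p : F α}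
    (hp : p ∈ EH α S) : ιG α t * p * ιG α (star t) ∈ EH α S := by
  obtain ⟨e₀, l, ⟨he₀S, he₀⟩, hl, rfl⟩ := hp
  have hconj {e : G} (he : e ∈ S) : t * e * star t ∈ S :=
    hS.mul_mem (hS.mul_mem ht he) (hS.star_mem ht)
  rw [ιG_mul_elemP_mul_star α he₀ fun e he => (hl e he).2]
  refine ⟨_, _, ⟨hconj he₀S, isIdempotentElem_conj he₀ t⟩, fun e he => ?_, rfl⟩
  obtain ⟨f, hf, rfl⟩ := List.mem_map.1 he
  exact ⟨hconj (hl f hf).1, isIdempotentElem_conj (hl f hf).2 t⟩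

end ProjectionSets

section Groupoid

variable (S : Set G)

theorem star_mul_self_mem_H0_of_mem_GH {x : F α} (hx : x ∈ GH α S) :
    star x * x ∈ H0 α S := by
  obtain ⟨-, g, e, he, rfl, hge⟩ := hx
  have he' := mem_EG_of_mem_EH α S he.1
  convert he using 1
  calc star (ιG α g * e) * (ιG α g * e) = e * ιG α (star g * g) * e := by
        rw [star_ιG_mul_of_mem_EG α he', ιG_mul]; noncomm_ring
    _ = e := by rw [hge, (isStarProjection_of_mem_EG α he').isIdempotentElem.eq]

theorem mul_star_mul_self_of_mem_GH {x : F α} (hx : x ∈ GH α S) : x * star x * x = x := by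
  obtain ⟨-, g, e, he, rfl, -⟩ := hx
  exact ιG_mul_mul_star_mul_self α (mem_EG_of_mem_EH α S he.1) g

theorem mul_star_self_mem_EG_of_mem_GH {x : F α} (hx : x ∈ GH α S) : x * star x ∈ EG α := by
  obtain ⟨-, g, e, he, rfl, -⟩ := hx
  have he' := mem_EG_of_mem_EH α S he.1
  rw [ιG_mul_mul_star_self α he']
  exact ιG_mul_mul_star_mem_EG α he' g

theorem mul_star_mul_self_of_mem_Hgpd {z : F α} (hz : z ∈ Hgpd α S) : z * star z * z = z := by
  obtain ⟨-, t, -, e, he, rfl⟩ := hz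
  exact ιG_mul_mul_star_mul_self α (mem_EG_of_mem_EH α S he.1) t

theorem mul_star_self_mem_EH_of_mem_Hgpd (hS : IsSubInvSemigroup S) {z : F α}
    (hz : z ∈ Hgpd α S) : z * star z ∈ EH α S := by
  obtain ⟨-, t, ht, e, he, rfl⟩ := hz
  rw [ιG_mul_mul_star_self α (mem_EG_of_mem_EH α S he.1)]
  exact ιG_mul_mul_star_mem_EH α S hS ht he.1

theorem exists_star_eq_of_mem_Hgpd (hS : IsSubInvSemigroup S) {z : F α} (hz : z ∈ Hgpd α S) :
    ∃ s ∈ S, star z = ιG α s * (z * star z) := by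
  obtain ⟨-, t, ht, e, he, rfl⟩ := hz
  have he' := mem_EG_of_mem_EH α S he.1
  refine ⟨star t, hS.star_mem ht, ?_⟩
  rw [ιG_mul_mul_star_self α he', star_ιG_mul_of_mem_EG α he', mul_ιG_star_of_mem_EG α he']

/-- By minimality of `x* x` in `H⁽⁰⁾`, since `(x* y)(x* y)* ≤ x* x`. -/
theorem star_mul_mul_star_eq_of_mem_Hgpd (hS : IsSubInvSemigroup S) {x y : F α}
    (hx : x ∈ GH α S) (hxy : star x * y ∈ Hgpd α S) :
    star x * y * star (star x * y) = star x * x := by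
  have hz := mul_star_mul_self_of_mem_Hgpd α S hxy
  refine (star_mul_self_mem_H0_of_mem_GH α S hx).2.2 _
    (mul_star_self_mem_EH_of_mem_Hgpd α S hS hxy) (fun h0 => hxy.1 ?_) ?_
  · rw [← hz, h0, zero_mul]
  · calc star x * y * star (star x * y) * (star x * x)
        = star x * y * star y * (x * star x * x) := by
          simp only [star_mul, star_star, mul_assoc]
      _ = star x * y * star (star x * y) := by
          rw [mul_star_mul_self_of_mem_GH α S hx, star_mul, star_star, mul_assoc]

theorem star_mul_mem_Hgpd_symm (hS : IsSubInvSemigroup S) {x y : F α} (hx : x ∈ GH α S)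
    (hxy : star x * y ∈ Hgpd α S) : star y * x ∈ Hgpd α S := by
  obtain ⟨s, hs, hstar⟩ := exists_star_eq_of_mem_Hgpd α S hS hxy
  rw [star_mul_mul_star_eq_of_mem_Hgpd α S hS hx hxy, star_mul, star_star] at hstar
  refine ⟨fun h0 => hxy.1 ?_, s, hs, _, star_mul_self_mem_H0_of_mem_GH α S hx, hstar⟩
  rw [← star_star (star x * y), star_mul, star_star, h0, star_zero]

theorem mul_star_self_eq_of_star_mul_mem_Hgpd (hS : IsSubInvSemigroup S) {x y : F α}
    (hx : x ∈ GH α S) (hy : y ∈ GH α S) (hxy : star x * y ∈ Hgpd α S) :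
    x * star x = y * star y :=
  mul_star_self_eq_of_commute (mul_star_mul_self_of_mem_GH α S hx)
    (mul_star_mul_self_of_mem_GH α S hy)
    (commute_of_mem_EG α (mul_star_self_mem_EG_of_mem_GH α S hx) fun _ hf =>
      (commute_of_mem_EG α (mul_star_self_mem_EG_of_mem_GH α S hy) fun _ hf' =>
        commute_ιG_ιG α hf' hf).symm)
    (star_mul_mul_star_eq_of_mem_Hgpd α S hS hx hxy)
    (star_mul_mul_star_eq_of_mem_Hgpd α S hS hy (star_mul_mem_Hgpd_symm α S hS hx hxy))

end Groupoid

section Action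

def letterAction : (A ⊕ G) × Bool → Module.End ℂ A
  | (.inl _, _) => 0
  | (.inr g, false) => (α g : A →ₗ[ℂ] A)
  | (.inr g, true) => (α (star g) : A →ₗ[ℂ] A)

def freeAction : FreeStar (A ⊕ G) →ₐ[ℂ] Module.End ℂ A :=
  MonoidAlgebra.lift ℂ (Module.End ℂ A) _ (FreeMonoid.lift (letterAction α))

theorem freeAction_of (x : (A ⊕ G) × Bool) :
    freeAction α (MonoidAlgebra.single (FreeMonoid.of x) 1) = letterAction α x := by
  rw [freeAction, MonoidAlgebra.lift_single, one_smul, FreeMonoid.lift_eval_of]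

theorem freeAction_genA (a : A) : freeAction α (genA a) = 0 := freeAction_of α _

theorem freeAction_star_genA (a : A) : freeAction α (star (genA (G := G) a)) = 0 := by
  rw [genA, FreeStar.star_single_of, freeAction_of]; rfl

theorem freeAction_genG (g : G) : freeAction α (genG g) = (α g : A →ₗ[ℂ] A) :=
  freeAction_of α _

theorem freeAction_star_genG (g : G) :
    freeAction α (star (genG (A := A) g)) = (α (star g) : A →ₗ[ℂ] A) := by
  rw [genG, FreeStar.star_single_of, freeAction_of]; rfl

theorem toLinearMap_map_mul (hα : IsGAlgebra α) (g h : G) :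
    (α (g * h) : A →ₗ[ℂ] A) = (α g : A →ₗ[ℂ] A) * (α h : A →ₗ[ℂ] A) := by
  rw [hα.map_mul]; rfl

theorem freeAction_eq_of_rel (hα : IsGAlgebra α) {x y : FreeStar (A ⊕ G)} (h : Rel α x y) :
    freeAction α x = freeAction α y ∧ freeAction α (star x) = freeAction α (star y) := by
  induction h with
  | star_cl _ ih => rw [star_star, star_star]; exact ih.symm
  | _ => simp only [map_add, map_mul, star_add, star_mul, Algebra.smul_def, star_star,
      freeAction_genA, freeAction_star_genA, freeAction_genG, freeAction_star_genG,
      toLinearMap_map_mul α hα, zero_mul, mul_zero, add_zero, and_self]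

def action (hα : IsGAlgebra α) : F α →ₐ[ℂ] Module.End ℂ A :=
  RingQuot.liftAlgHom ℂ ⟨freeAction α, fun _ _ h => (freeAction_eq_of_rel α hα h).1⟩

theorem action_ιG (hα : IsGAlgebra α) (g : G) :
    action α hα (ιG α g) = (α g : A →ₗ[ℂ] A) := by
  rw [action, ιG, RingQuot.liftAlgHom_mkAlgHom_apply, freeAction_genG]

theorem action_prodOneSub_apply (hα : IsGAlgebra α) (l : List G) (a : A) :
    action α hα (prodOneSub α l) a = actL α l a := by
  induction l with
  | nil => simp [prodOneSub, actL]
  | cons e l ih =>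
    rw [prodOneSub_cons, map_mul, map_sub, map_one, action_ιG, Module.End.mul_apply, ih]
    rfl

theorem action_elemP_apply (hα : IsGAlgebra α) (e₀ : G) (l : List G) (a : A) :
    action α hα (elemP α e₀ l) a = actP α e₀ l a := by
  rw [elemP_eq_mul_prodOneSub, map_mul, Module.End.mul_apply, action_prodOneSub_apply,
    action_ιG]
  rfl

theorem actP_eq_of_elemP_eq (hα : IsGAlgebra α) {e₀ f₀ : G} {l m : List G}
    (h : elemP α e₀ l = elemP α f₀ m) : actP α e₀ l = actP α f₀ m := by
  ext a
  rw [← action_elemP_apply α hα, h, action_elemP_apply]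

end Action

section Covariance

theorem ιA_act_star_mul_star {p : F α} (hp : p ∈ EG α) (g : G) (a : A) :
    ιA α (α (star g) a) * star (ιG α g * p) = star (ιG α g * p) * ιA α a := by
  rw [star_ιG_mul_of_mem_EG α hp, ← mul_assoc,
    ← (commute_of_mem_EG α hp fun f hf => commute_ιG_ιA α hf _).eq, mul_assoc,
    ιA_act_mul_ιG, mul_assoc]

theorem ιG_mul_mul_ιA_act_star {p : F α} (hp : p ∈ EG α) (g : G) (a : A) :
    ιG α g * p * ιA α (α (star g) a) = ιA α a * (ιG α g * p) := by
  simpa only [star_mul, star_star, star_ιA, map_star] using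
    congrArg star (ιA_act_star_mul_star α hp g (star a))

theorem ιA_actStar_mul_star_mul (hα : IsGAlgebra α) {g e₀ h f₀ : G} {l m : List G}
    (he₀ : IsIdempotentElem e₀) (hl : ∀ e ∈ l, IsIdempotentElem e)
    (hf₀ : IsIdempotentElem f₀) (hm : ∀ e ∈ m, IsIdempotentElem e)
    (hrange : elemGE α g e₀ l * star (elemGE α g e₀ l) =
      elemGE α h f₀ m * star (elemGE α h f₀ m)) (d : A) :
    ιA α (actStar α g e₀ l d) * (star (elemGE α g e₀ l) * elemGE α h f₀ m) =
      star (elemGE α g e₀ l) * elemGE α h f₀ m * ιA α (actStar α h f₀ m d) := by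
  have hp : elemP α e₀ l ∈ EG α := ⟨e₀, l, he₀, hl, rfl⟩
  have hq : elemP α f₀ m ∈ EG α := ⟨f₀, m, hf₀, hm, rfl⟩
  have hact : actP α (g * e₀ * star g) (l.map fun e => g * e * star g) =
      actP α (h * f₀ * star h) (m.map fun e => h * e * star h) := by
    refine actP_eq_of_elemP_eq α hα ?_
    rwa [← ιG_mul_elemP_mul_star α he₀ hl, ← ιG_mul_elemP_mul_star α hf₀ hm,
      ← ιG_mul_mul_star_self α hp, ← ιG_mul_mul_star_self α hq]
  calc ιA α (actStar α g e₀ l d) * (star (elemGE α g e₀ l) * elemGE α h f₀ m)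
      = star (elemGE α g e₀ l) *
          ιA α (actP α (g * e₀ * star g) (l.map fun e => g * e * star g) d) *
          elemGE α h f₀ m := by
        rw [← mul_assoc, elemGE, actStar, ιA_act_star_mul_star α hp]
    _ = star (elemGE α g e₀ l) * elemGE α h f₀ m * ιA α (actStar α h f₀ m d) := by
        rw [hact, mul_assoc (star _), mul_assoc (star _), elemGE, elemGE, actStar,
          ιG_mul_mul_ιA_act_star α hq]

theorem actStar_star (g e₀ : G) (l : List G) (a : A) :
    actStar α g e₀ l (star a) = star (actStar α g e₀ l a) := by
  simp only [actStar, actP, actL_star, map_star]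

end Covariance

end

theorem B0_inner_product_star_general
    {G : Type*} [InverseSemigroup G]
    {A : Type*} [NonUnitalNormedRing A] [StarRing A] [NormedSpace ℂ A]
    (α : G → A →⋆ₙₐ[ℂ] A) (hα : IsGAlgebra α)
    (S : Set G) (hS : IsSubInvSemigroup S)
    (gg ge₀ : G) (gl : List G) (hge : ge₀ * ge₀ = ge₀) (hgl : ∀ e ∈ gl, e * e = e)
    (hgGH : elemGE α gg ge₀ gl ∈ GH α S)
    (hg he₀ : G) (lh : List G) (hhe : he₀ * he₀ = he₀) (hlh : ∀ e ∈ lh, e * e = e)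
    (hhGH : elemGE α hg he₀ lh ∈ GH α S)
    (a b : A) :
    star (ind (star (elemGE α gg ge₀ gl) * elemGE α hg he₀ lh ∈ Hgpd α S) •
      (ιA α (actStar α gg ge₀ gl (star a * b)) *
        (star (elemGE α gg ge₀ gl) * elemGE α hg he₀ lh)))
    = ind (star (elemGE α hg he₀ lh) * elemGE α gg ge₀ gl ∈ Hgpd α S) •
      (ιA α (actStar α hg he₀ lh (star b * a)) *
        (star (elemGE α hg he₀ lh) * elemGE α gg ge₀ gl)) := by
  by_cases hxy : star (elemGE α gg ge₀ gl) * elemGE α hg he₀ lh ∈ Hgpd α S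
  · have hyx := star_mul_mem_Hgpd_symm α S hS hgGH hxy
    have hrange := mul_star_self_eq_of_star_mul_mem_Hgpd α S hS hgGH hhGH hxy
    rw [ind, ind, if_pos hxy, if_pos hyx, one_smul, one_smul, star_mul, star_mul, star_star,
      star_ιA, ← actStar_star, star_mul, star_star]
    exact (ιA_actStar_mul_star_mul α hα hhe hlh hge hgl hrange.symm (star b * a)).symm
  · have hyx : star (elemGE α hg he₀ lh) * elemGE α gg ge₀ gl ∉ Hgpd α S :=
      fun h => hxy (star_mul_mem_Hgpd_symm α S hS hhGH h)
    rw [ind, ind, if_neg hxy, if_neg hyx, zero_smul, zero_smul, star_zero]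

/-- The identity `⟨x,y⟩_{B₀}* = ⟨y,x⟩_{B₀}` on standard elements
`x = a⋊g`, `y = b⋊h`:  for all `a, b ∈ A` and `g, h ∈ G_H` (given by representations),
`([g* h ∈ H] · α_{g*}(a*·b) · (g* h))* = [h* g ∈ H] · α_{h*}(b*·a) · (h* g)`
holds in `𝔽(G,A)`. -/
theorem B0_inner_product_star
    {G : Type*} [InverseSemigroup G]
    {A : Type*} [NonUnitalNormedRing A] [StarRing A] [CStarRing A] [NormedSpace ℂ A]
    [IsScalarTower ℂ A A] [SMulCommClass ℂ A A] [StarModule ℂ A] [CompleteSpace A]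
    (α : G → A →⋆ₙₐ[ℂ] A) (hα : IsGAlgebra α)
    (S : Set G) (hS : IsSubInvSemigroup S) (hSfin : S.Finite)
    (gg ge₀ : G) (gl : List G) (hge : ge₀ * ge₀ = ge₀) (hgl : ∀ e ∈ gl, e * e = e)
    (hgH0 : elemP α ge₀ gl ∈ H0 α S) (hgGH : elemGE α gg ge₀ gl ∈ GH α S)
    (hg he₀ : G) (lh : List G) (hhe : he₀ * he₀ = he₀) (hlh : ∀ e ∈ lh, e * e = e)
    (hhH0 : elemP α he₀ lh ∈ H0 α S) (hhGH : elemGE α hg he₀ lh ∈ GH α S)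
    (a b : A) :
    star (ind (star (elemGE α gg ge₀ gl) * elemGE α hg he₀ lh ∈ Hgpd α S) •
      (ιA α (actStar α gg ge₀ gl (star a * b)) *
        (star (elemGE α gg ge₀ gl) * elemGE α hg he₀ lh)))
    = ind (star (elemGE α hg he₀ lh) * elemGE α gg ge₀ gl ∈ Hgpd α S) •
      (ιA α (actStar α hg he₀ lh (star b * a)) *
        (star (elemGE α hg he₀ lh) * elemGE α gg ge₀ gl)) :=
  B0_inner_product_star_general α hα S hS gg ge₀ gl hge hgl hgGH hg he₀ lh hhe hlh hhGH a b

end Green
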